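/- arXiv:2409.07810 — 4 statements merged into one kernel-verified Lean document; each statement's English description precedes it below -/
import Mathlib

section
/- For every Laurent polynomial p of degree at most n (i.e., p(z) = ∑_{k=−n}^{n} c_k z^k), the average of the n-point Szegő rule with parameter τ and the n-point anti-Szegő rule with parameter −τ is exact: I(p) = (1/2)[S_n(p) + S̃_n(p)]. -/
/-!
With `w = exp (i(θ + 2π)/n)` and `ζ = exp (iπ/n)`, a primitive `2n`-th root of unity, the nodes
interlace as `z k = w ζ^(2(k-1))` and `zt k = w ζ^(2(k-1)+1)`, so the averaged rule is the
equispaced `2n`-point rule `(1/2n) ∑_{m<2n} f (w ζ^m)`. This rule integrates `z^j` exactly when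
`|j| < 2n`: for `j ≠ 0` the integral runs over a full period of `e^{ijt}` and the rule sums a
geometric progression of ratio `ζ^j ≠ 1`, so both vanish, while for `j = 0` both are `1`.
-/

open Complex Real Finset

lemma Finset.sum_range_two_mul {M : Type*} [AddCommMonoid M] (g : ℕ → M) (n : ℕ) :
    ∑ m ∈ range (2 * n), g m = ∑ i ∈ range n, (g (2 * i) + g (2 * i + 1)) := by
  induction n with
  | zero => simp
  | succ n ih =>
    rw [mul_add, mul_one, sum_range_succ, sum_range_succ, ih, sum_range_succ, add_assoc]

lemma IsPrimitiveRoot.sum_mul_pow_zpow {K : Type*} [Field K] {ζ : K} {N : ℕ}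
    (hζ : IsPrimitiveRoot ζ N) (w : K) (j : ℤ) :
    ∑ m ∈ range N, (w * ζ ^ m) ^ j = if (N : ℤ) ∣ j then N * w ^ j else 0 := by
  have hterm : ∀ m : ℕ, (w * ζ ^ m) ^ j = w ^ j * (ζ ^ j) ^ m := fun m ↦ by
    rw [mul_zpow, ← zpow_natCast, ← zpow_natCast, ← zpow_mul, ← zpow_mul, mul_comm (m : ℤ)]
  simp_rw [hterm, ← mul_sum]
  split_ifs with hj
  · rw [(hζ.zpow_eq_one_iff_dvd j).mpr hj]
    simp [mul_comm]
  · have hpow : (ζ ^ j) ^ N = 1 := by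
      rw [← zpow_natCast, ← zpow_mul, mul_comm, zpow_mul, hζ.zpow_eq_one, one_zpow]
    rw [geom_sum_eq (mt (hζ.zpow_eq_one_iff_dvd j).mp hj), hpow, sub_self, zero_div, mul_zero]

lemma integral_exp_mul_I_zpow (j : ℤ) :
    ∫ t in (-π)..π, exp (t * I) ^ j = if j = 0 then 2 * (π : ℂ) else 0 := by
  simp_rw [← exp_int_mul]
  split_ifs with hj
  · simp [hj]; ring
  · have hjI : (j : ℂ) * I ≠ 0 := mul_ne_zero (Int.cast_ne_zero.mpr hj) I_ne_zero
    have hperiod : exp (j * I * π) = exp (j * I * (-π : ℝ)) := by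
      rw [show (j : ℂ) * I * π = j * I * (-π : ℝ) + j * (2 * π * I) by push_cast; ring,
        Complex.exp_add, exp_int_mul_two_pi_mul_I, mul_one]
    have hcomm : ∀ t : ℝ, (j : ℂ) * (t * I) = j * I * t := fun t ↦ by ring
    simp_rw [hcomm]
    rw [integral_exp_mul_complex hjI]
    push_cast at hperiod ⊢
    rw [hperiod, sub_self, zero_div]

lemma integral_laurent_exp_mul_I {S : Finset ℤ} (h0 : 0 ∈ S) {c : ℤ → ℂ} {p : ℂ → ℂ}
    (hp : ∀ z : ℂ, z ≠ 0 → p z = ∑ k ∈ S, c k * z ^ k) :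
    ∫ t in (-π)..π, p (exp (t * I)) = 2 * π * c 0 := by
  have hpt : ∀ t : ℝ, p (exp (t * I)) = ∑ k ∈ S, c k * exp (t * I) ^ k :=
    fun t ↦ hp _ (exp_ne_zero _)
  simp_rw [hpt]
  have hcont (k : ℤ) : Continuous fun t : ℝ ↦ c k * exp (t * I) ^ k :=
    continuous_const.mul ((by fun_prop : Continuous fun t : ℝ ↦ exp (t * I)).zpow₀ k
      fun _ ↦ Or.inl (exp_ne_zero _))
  rw [intervalIntegral.integral_finsetSum fun k _ ↦ (hcont k).intervalIntegrable _ _]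
  simp_rw [intervalIntegral.integral_const_mul, integral_exp_mul_I_zpow]
  simp [h0, mul_comm]

lemma IsPrimitiveRoot.sum_laurent_mul_pow {K : Type*} [Field K] {ζ w : K} {N : ℕ}
    (hζ : IsPrimitiveRoot ζ N) (hw : w ≠ 0) {S : Finset ℤ} (h0 : 0 ∈ S)
    (hS : ∀ k ∈ S, |k| < N) {c : ℤ → K} {p : K → K}
    (hp : ∀ z : K, z ≠ 0 → p z = ∑ k ∈ S, c k * z ^ k) :
    ∑ m ∈ range N, p (w * ζ ^ m) = N * c 0 := by
  have hζ0 : ζ ≠ 0 := hζ.ne_zero (by have := hS 0 h0; rw [abs_zero] at this; omega)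
  have hdvd : ∀ k ∈ S, (N : ℤ) ∣ k ↔ k = 0 := fun k hk ↦
    ⟨fun h ↦ Int.eq_zero_of_abs_lt_dvd h (hS k hk), fun h ↦ h ▸ dvd_zero _⟩
  rw [sum_congr rfl fun m _ ↦ hp _ (mul_ne_zero hw (pow_ne_zero m hζ0)), sum_comm]
  simp_rw [← mul_sum]
  rw [sum_congr rfl fun k hk ↦ by rw [hζ.sum_mul_pow_zpow, if_congr (hdvd k hk) rfl rfl]]
  simp [h0, mul_comm]

lemma sum_szego_nodes_add_sum_antiSzego_nodes (f : ℂ → ℂ) (n : ℕ) (θ : ℝ) {z zt : ℕ → ℂ}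
    (hz : ∀ k ∈ Icc 1 n, z k = exp (((θ + 2 * k * π) / n) * I))
    (hzt : ∀ k ∈ Icc 1 n, zt k = exp (((θ + (2 * k + 1) * π) / n) * I)) :
    ∑ k ∈ Icc 1 n, f (z k) + ∑ k ∈ Icc 1 n, f (zt k) =
      ∑ m ∈ range (2 * n), f (exp ((θ + 2 * π) / n * I) * exp (π / n * I) ^ m) := by
  rw [sum_range_two_mul, ← sum_add_distrib, ← Ico_add_one_right_eq_Icc, sum_Ico_eq_sum_range,
    Nat.add_sub_cancel]
  refine sum_congr rfl fun i hi ↦ ?_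
  have hi' : 1 + i ∈ Icc 1 n := by simp only [mem_range, mem_Icc] at hi ⊢; omega
  rw [hz _ hi', hzt _ hi', ← Complex.exp_nat_mul, ← Complex.exp_nat_mul, ← Complex.exp_add,
    ← Complex.exp_add]
  congr 3 <;> push_cast <;> ring

theorem averaged_rule_exact_on_laurent_general (n : ℕ) (hn : 1 ≤ n)
    (θ : ℝ)
    (c : ℤ → ℂ) (p : ℂ → ℂ)
    (hp : ∀ z : ℂ, z ≠ 0 → p z = ∑ k ∈ Finset.Icc (-(n : ℤ)) (n : ℤ), c k * z ^ k)
    (z zt : ℕ → ℂ)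
    (hz : ∀ k ∈ Finset.Icc 1 n, z k = Complex.exp (((θ + 2 * k * Real.pi) / n) * Complex.I))
    (hzt : ∀ k ∈ Finset.Icc 1 n, zt k = Complex.exp (((θ + (2 * k + 1) * Real.pi) / n) * Complex.I)) :
    (1 / (2 * Real.pi : ℂ)) * ∫ t in (-Real.pi)..Real.pi, p (Complex.exp (t * Complex.I)) =
      (1 / 2) * ((1 / (n : ℂ)) * ∑ k ∈ Finset.Icc 1 n, p (z k) +
                 (1 / (n : ℂ)) * ∑ k ∈ Finset.Icc 1 n, p (zt k)) := by
  have hζ : IsPrimitiveRoot (exp (π / n * I)) (2 * n) := by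
    convert isPrimitiveRoot_exp (2 * n) (by omega) using 2
    push_cast
    field_simp
  have h0 : (0 : ℤ) ∈ Icc (-(n : ℤ)) n := by simp
  have hS : ∀ k ∈ Icc (-(n : ℤ)) n, |k| < ((2 * n : ℕ) : ℤ) := fun k hk ↦ by
    rw [mem_Icc] at hk
    rw [abs_lt]
    omega
  rw [integral_laurent_exp_mul_I h0 hp, ← mul_add,
    sum_szego_nodes_add_sum_antiSzego_nodes p n θ hz hzt,
    hζ.sum_laurent_mul_pow (exp_ne_zero _) h0 hS hp]
  have hn0 : (n : ℂ) ≠ 0 := by exact_mod_cast (show n ≠ 0 by omega)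
  field_simp
  push_cast
  ring

theorem averaged_rule_exact_on_laurent (n : ℕ) (hn : 1 ≤ n)
    (τ : ℂ) (hτ : ‖τ‖ = 1) (θ : ℝ) (hθ : τ = -Complex.exp (θ * Complex.I))
    (c : ℤ → ℂ) (p : ℂ → ℂ)
    (hp : ∀ z : ℂ, z ≠ 0 → p z = ∑ k ∈ Finset.Icc (-(n : ℤ)) (n : ℤ), c k * z ^ k)
    (z zt : ℕ → ℂ)
    (hz : ∀ k ∈ Finset.Icc 1 n, z k = Complex.exp (((θ + 2 * k * Real.pi) / n) * Complex.I))
    (hzt : ∀ k ∈ Finset.Icc 1 n, zt k = Complex.exp (((θ + (2 * k + 1) * Real.pi) / n) * Complex.I)) :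
    (1 / (2 * Real.pi : ℂ)) * ∫ t in (-Real.pi)..Real.pi, p (Complex.exp (t * Complex.I)) =
      (1 / 2) * ((1 / (n : ℂ)) * ∑ k ∈ Finset.Icc 1 n, p (z k) +
                 (1 / (n : ℂ)) * ∑ k ∈ Finset.Icc 1 n, p (zt k)) :=
  averaged_rule_exact_on_laurent_general n hn θ c p hp z zt hz hzt
end

section
/- For every n ≥ 1 and every x ∈ ℝ such that none of x + (k−1)π/n (k = 1,…,n) is a multiple of π, the identity (1/n)·∑_{k=1}^{n} cot(x + (k−1)π/n) = cot(n x) holds. -/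
/-!
Put `w = exp (2 i z)` and `ζ = exp (2 π i / n)`. Then `cot (z + k π / n) = (u + 1) / (i (1 - u))`
with `u = w ζ ^ k`, and `cot (n z)` is the same expression in `u ^ n = w ^ n`. Writing
`1 / (1 - u) = (1 + u + ⋯ + u ^ (n - 1)) / (1 - w ^ n)` and summing over `k`, the orthogonality
`∑ k, ζ ^ (j k) = 0` for `0 < j < n` leaves only `j = 0`, so `∑ k, 1 / (1 - w ζ ^ k) = n / (1 - w ^ n)`.
-/

open Real Finset Complex

namespace IsPrimitiveRoot

variable {K : Type*} [Field K] {n : ℕ} {ζ w : K}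

lemma geom_sum_pow_eq_ite (hζ : IsPrimitiveRoot ζ n) {j : ℕ} (hj : j < n) :
    ∑ k ∈ range n, (ζ ^ j) ^ k = if j = 0 then (n : K) else 0 := by
  split_ifs with hj0
  · simp [hj0]
  · have hne : ζ ^ j ≠ 1 := fun h ↦
      hj0 (Nat.eq_zero_of_dvd_of_lt ((hζ.pow_eq_one_iff_dvd j).1 h) hj)
    rw [geom_sum_eq hne, ← pow_mul, mul_comm, pow_mul, hζ.pow_eq_one, one_pow, sub_self,
      zero_div]

lemma mul_pow_pow_eq_pow (hζ : IsPrimitiveRoot ζ n) (w : K) (k : ℕ) : (w * ζ ^ k) ^ n = w ^ n := by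
  rw [mul_pow, ← pow_mul, mul_comm k, pow_mul, hζ.pow_eq_one, one_pow, mul_one]

lemma one_sub_mul_pow_ne_zero (hζ : IsPrimitiveRoot ζ n) (hw : w ^ n ≠ 1) (k : ℕ) :
    1 - w * ζ ^ k ≠ 0 := fun h ↦
  hw (by rw [← hζ.mul_pow_pow_eq_pow w k, ← sub_eq_zero.1 h, one_pow])

lemma sum_one_div_one_sub_mul_pow (hζ : IsPrimitiveRoot ζ n) (hw : w ^ n ≠ 1) :
    ∑ k ∈ range n, 1 / (1 - w * ζ ^ k) = n / (1 - w ^ n) := by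
  have hn : n ≠ 0 := by rintro rfl; exact hw (pow_zero w)
  have hw' : 1 - w ^ n ≠ 0 := sub_ne_zero.2 (Ne.symm hw)
  have hterm (k : ℕ) :
      1 / (1 - w * ζ ^ k) = (∑ j ∈ range n, w ^ j * (ζ ^ j) ^ k) / (1 - w ^ n) := by
    rw [div_eq_div_iff (hζ.one_sub_mul_pow_ne_zero hw k) hw', one_mul,
      ← hζ.mul_pow_pow_eq_pow w k, ← mul_neg_geom_sum, mul_comm]
    congr 1
    exact sum_congr rfl fun j _ ↦ by ring
  calc ∑ k ∈ range n, 1 / (1 - w * ζ ^ k)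
      = (∑ j ∈ range n, w ^ j * ∑ k ∈ range n, (ζ ^ j) ^ k) / (1 - w ^ n) := by
        simp_rw [hterm, ← sum_div, mul_sum]
        rw [sum_comm]
    _ = n / (1 - w ^ n) := by
        rw [sum_congr rfl fun j hj ↦ by rw [hζ.geom_sum_pow_eq_ite (mem_range.1 hj)]]
        simp [Nat.pos_of_ne_zero hn]

lemma sum_add_one_div_one_sub_mul_pow (hζ : IsPrimitiveRoot ζ n) (hw : w ^ n ≠ 1) :
    ∑ k ∈ range n, (w * ζ ^ k + 1) / (1 - w * ζ ^ k) = n * ((w ^ n + 1) / (1 - w ^ n)) := by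
  have hw' : 1 - w ^ n ≠ 0 := sub_ne_zero.2 (Ne.symm hw)
  have hterm (k : ℕ) :
      (w * ζ ^ k + 1) / (1 - w * ζ ^ k) = 2 * (1 / (1 - w * ζ ^ k)) - 1 := by
    field_simp [hζ.one_sub_mul_pow_ne_zero hw k]
    ring
  rw [sum_congr rfl fun k _ ↦ hterm k, sum_sub_distrib, ← mul_sum,
    hζ.sum_one_div_one_sub_mul_pow hw, sum_const, card_range, nsmul_eq_mul, mul_one]
  field_simp
  ring

end IsPrimitiveRoot

namespace Complex

lemma exp_two_mul_I_mul_eq_one_iff {z : ℂ} : exp (2 * I * z) = 1 ↔ ∃ m : ℤ, z = m * π := by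
  rw [exp_eq_one_iff]
  refine exists_congr fun m ↦ ?_
  rw [show (m : ℂ) * (2 * π * I) = 2 * I * (m * π) by ring]
  exact mul_right_inj' (by simp)

theorem sum_cot_add_nat_mul_pi_div {n : ℕ} [NeZero n] {z : ℂ}
    (hz : ∀ k < n, ∀ m : ℤ, z + k * π / n ≠ m * π) :
    ∑ k ∈ range n, cot (z + k * π / n) = n * cot (n * z) := by
  set ζ := exp (2 * π * I / n)
  have hζ : IsPrimitiveRoot ζ n := isPrimitiveRoot_exp n (NeZero.ne n)
  set w := exp (2 * I * z)
  have hshift (k : ℕ) : exp (2 * I * (z + k * π / n)) = w * ζ ^ k := by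
    rw [← exp_nat_mul, ← exp_add]
    congr 1
    field_simp [NeZero.ne n]
  have hwn : w ^ n ≠ 1 := by
    intro h
    obtain ⟨k, hk, hζk⟩ := hζ.inv.eq_pow_of_pow_eq_one h
    have : exp (2 * I * (z + k * π / n)) = 1 := by
      rw [hshift, ← hζk, inv_pow, inv_mul_cancel₀ (pow_ne_zero _ (hζ.ne_zero (NeZero.ne n)))]
    obtain ⟨m, hm⟩ := exp_two_mul_I_mul_eq_one_iff.1 this
    exact hz k hk m hm
  have hpow : exp (2 * I * (n * z)) = w ^ n := by
    rw [← exp_nat_mul]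
    ring_nf
  simp_rw [cot_eq_exp_ratio, hshift, hpow, mul_comm I, ← div_div, ← sum_div,
    hζ.sum_add_one_div_one_sub_mul_pow hwn, mul_div_assoc]

end Complex

theorem Real.sum_cot_add_nat_mul_pi_div {n : ℕ} [NeZero n] {x : ℝ}
    (hx : ∀ k < n, ∀ m : ℤ, x + k * π / n ≠ m * π) :
    ∑ k ∈ range n, Real.cot (x + k * π / n) = n * Real.cot (n * x) := by
  have hz : ∀ k < n, ∀ m : ℤ, (x : ℂ) + k * π / n ≠ m * π := fun k hk m h ↦
    hx k hk m (by exact_mod_cast h)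
  exact_mod_cast Complex.sum_cot_add_nat_mul_pi_div hz

theorem cot_summation_identity (n : ℕ) (hn : 1 ≤ n) (x : ℝ)
    (hx : ∀ k ∈ Finset.Icc 1 n, ∀ m : ℤ, x + (k - 1 : ℝ) * Real.pi / n ≠ m * Real.pi) :
    (1 / (n : ℝ)) * ∑ k ∈ Finset.Icc 1 n, Real.cot (x + (k - 1 : ℝ) * Real.pi / n) =
      Real.cot (n * x) := by
  have : NeZero n := ⟨by omega⟩
  have hshift : ∀ f : ℝ → ℝ, ∑ k ∈ Icc 1 n, f (k - 1) = ∑ k ∈ range n, f k := fun f ↦ by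
    rw [← Ico_add_one_right_eq_Icc, sum_Ico_eq_sum_range]
    simp [add_comm]
  have hx' : ∀ k < n, ∀ m : ℤ, x + k * π / n ≠ m * π := fun k hk m ↦ by
    simpa using hx (k + 1) (mem_Icc.2 ⟨by omega, hk⟩) m
  rw [hshift fun t ↦ Real.cot (x + t * π / n), Real.sum_cot_add_nat_mul_pi_div hx']
  field_simp
end

section
/- (Pointwise stability of the prescribed-node Szegő rule for the Hilbert transform) Let f be continuous and 2π-periodic. For each φ and n ≥ 2, define H_n^{pr}f(φ) = (1/n)∑_{k=1}^{n}(f(θ_k) − f(φ))/tan((θ_k−φ)/2) with θ_k = φ + π/(4n) + 2kπ/n. Then |H_n^{pr}f(φ)| ≤ C·(log n)·‖f‖_∞ for a constant C independent of n, f, and φ. -/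
/-!
The half-angles are `(θ_k - φ)/2 = π(8k+1)/(8n)`; their distances to the zeros `0` and `π` of
`sin` are at least `πk/(8n)` and `π(n+1-k)/(8n)`. Since `|1/tan| ≤ 1/|sin|`, Jordan's inequality
bounds the `k`-th term by `2‖f‖_∞ · 4n (1/k + 1/(n+1-k))`, and the two harmonic sums give
`16‖f‖_∞ (1 + log n)`.
-/

open Real Finset

lemma two_div_pi_mul_abs_le_abs_sin {t : ℝ} (ht : |t| ≤ π / 2) : 2 / π * |t| ≤ |sin t| := by
  have h := mul_le_sin (abs_nonneg t) ht
  rcases abs_choice t with h' | h' <;> rw [h'] at h ⊢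
  · exact h.trans (le_abs_self _)
  · rw [sin_neg] at h
    exact h.trans (neg_le_abs _)

lemma two_div_pi_mul_min_le_abs_sin {y : ℝ} (h0 : 0 ≤ y) (h1 : y ≤ 3 * π / 2) :
    2 / π * min y |π - y| ≤ |sin y| := by
  have hπ := pi_pos
  rcases le_total y (π / 2) with h | h
  · calc 2 / π * min y |π - y| ≤ 2 / π * |y| := by
          gcongr; exact (min_le_left _ _).trans (le_abs_self y)
      _ ≤ |sin y| := two_div_pi_mul_abs_le_abs_sin (by rwa [abs_of_nonneg h0])
  · calc 2 / π * min y |π - y| ≤ 2 / π * |π - y| := by gcongr; exact min_le_right _ _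
      _ ≤ |sin (π - y)| := two_div_pi_mul_abs_le_abs_sin (abs_le.2 ⟨by linarith, by linarith⟩)
      _ = |sin y| := by rw [sin_pi_sub]

lemma inv_abs_sin_le {y : ℝ} (h0 : 0 < y) (h1 : y ≤ 3 * π / 2) (hy : y ≠ π) :
    |sin y|⁻¹ ≤ π / 2 * (y⁻¹ + |π - y|⁻¹) := by
  have hm : 0 < min y |π - y| := lt_min h0 (abs_pos.2 (sub_ne_zero.2 hy.symm))
  calc |sin y|⁻¹ ≤ (2 / π * min y |π - y|)⁻¹ :=
        inv_anti₀ (by positivity) (two_div_pi_mul_min_le_abs_sin h0.le h1)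
    _ = π / 2 * (min y |π - y|)⁻¹ := by rw [mul_inv, inv_div]
    _ ≤ π / 2 * (y⁻¹ + |π - y|⁻¹) := by
        gcongr
        rcases min_choice y |π - y| with h | h <;> rw [h]
        · exact le_add_of_nonneg_right (by positivity)
        · exact le_add_of_nonneg_left (by positivity)

lemma norm_div_tan_le (z : ℂ) (x : ℝ) : ‖z / (tan x : ℂ)‖ ≤ ‖z‖ * |sin x|⁻¹ := by
  rw [norm_div, Complex.norm_real, Real.norm_eq_abs, tan_eq_sin_div_cos, abs_div,
    div_div_eq_mul_div, mul_div_assoc, div_eq_mul_inv (|cos x|)]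
  exact mul_le_mul_of_nonneg_left
    (mul_le_of_le_one_left (by positivity) (abs_cos_le_one x)) (norm_nonneg z)

lemma sum_Icc_inv_add_inv_reflect_le (n : ℕ) :
    ∑ k ∈ Icc 1 n, ((k : ℝ)⁻¹ + ((n + 1 - k : ℕ) : ℝ)⁻¹) ≤ 2 * (1 + log n) := by
  have hreflect : ∑ k ∈ Icc 1 n, ((n + 1 - k : ℕ) : ℝ)⁻¹ = ∑ k ∈ Icc 1 n, (k : ℝ)⁻¹ :=
    sum_nbij' (fun k => n + 1 - k) (fun k => n + 1 - k)
      (fun k hk => by simp only [mem_Icc] at hk ⊢; omega)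
      (fun k hk => by simp only [mem_Icc] at hk ⊢; omega)
      (fun k hk => by simp only [mem_Icc] at hk; omega)
      (fun k hk => by simp only [mem_Icc] at hk; omega)
      (fun _ _ => rfl)
  have hH : ∑ k ∈ Icc 1 n, (k : ℝ)⁻¹ ≤ 1 + log n := by
    simpa [harmonic_eq_sum_Icc] using harmonic_le_one_add_log n
  rw [sum_add_distrib, hreflect]
  linarith

lemma Function.Periodic.norm_le_iSup_Icc {E : Type*} [SeminormedAddCommGroup E] {f : ℝ → E}
    {a b c : ℝ} (hp : Function.Periodic f c) (hf : Continuous f) (hc : 0 < c) (hab : a + c ≤ b)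
    (t : ℝ) : ‖f t‖ ≤ ⨆ x : Set.Icc a b, ‖f x‖ := by
  have hbdd : BddAbove (Set.range fun x : Set.Icc a b => ‖f x‖) := by
    rw [Set.range_comp' (fun t => ‖f t‖) Subtype.val, Subtype.range_coe]
    exact isCompact_Icc.bddAbove_image (continuous_norm.comp hf).continuousOn
  obtain ⟨y, hy, hfy⟩ := hp.exists_mem_Ico hc t a
  rw [hfy]
  exact le_ciSup hbdd ⟨y, hy.1, by linarith [hy.2]⟩

lemma inv_abs_sin_szego_node_le {n k : ℕ} (hk : k ∈ Icc 1 n) :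
    |sin (π * (8 * k + 1) / (8 * n))|⁻¹ ≤ 4 * n * ((k : ℝ)⁻¹ + ((n + 1 - k : ℕ) : ℝ)⁻¹) := by
  obtain ⟨hk1, hkn⟩ := mem_Icc.1 hk
  have hπ := pi_pos
  have hK : (1 : ℝ) ≤ k := by exact_mod_cast hk1
  have hKN : (k : ℝ) ≤ n := by exact_mod_cast hkn
  have hN : (0 : ℝ) < n := by linarith
  have hcast : ((n + 1 - k : ℕ) : ℝ) = n + 1 - k := by
    rw [Nat.cast_sub (by omega)]; push_cast; ring
  have hgap : (n : ℝ) + 1 - k ≤ |8 * (n : ℝ) - 8 * k - 1| := by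
    rcases hkn.lt_or_eq with hlt | rfl
    · have : (k : ℝ) + 1 ≤ n := by exact_mod_cast hlt
      exact le_abs.2 (Or.inl (by linarith))
    · exact le_abs.2 (Or.inr (by linarith))
  set y := π * (8 * k + 1) / (8 * n) with hy
  have hdist : |π - y| = π * |8 * (n : ℝ) - 8 * k - 1| / (8 * n) := by
    rw [show π - y = π * (8 * n - 8 * k - 1) / (8 * n) by rw [hy]; field_simp; ring,
      abs_div, abs_mul, abs_of_pos hπ, abs_of_pos (by positivity : (0 : ℝ) < 8 * n)]
  have hy_ne : y ≠ π := by
    intro h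
    have : (8 * k + 1 : ℤ) = 8 * n := by
      have h' : (8 * k + 1 : ℝ) = 8 * n := by
        rw [hy, div_eq_iff (by positivity)] at h
        nlinarith
      exact_mod_cast h'
    omega
  calc |sin y|⁻¹ ≤ π / 2 * (y⁻¹ + |π - y|⁻¹) :=
        inv_abs_sin_le (by positivity)
          (by rw [hy, div_le_iff₀ (by positivity)]; nlinarith) hy_ne
    _ ≤ π / 2 * ((π * k / (8 * n))⁻¹ + (π * (n + 1 - k) / (8 * n))⁻¹) := by
        rw [hdist, hy]
        have : 0 < (n : ℝ) + 1 - k := by linarith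
        gcongr
        linarith
    _ = 4 * n * ((k : ℝ)⁻¹ + ((n + 1 - k : ℕ) : ℝ)⁻¹) := by
        rw [hcast]
        have : (n : ℝ) + 1 - k ≠ 0 := by linarith
        field_simp
        ring

lemma norm_szego_term_le {f : ℝ → ℂ} {M : ℝ} (hfM : ∀ t, ‖f t‖ ≤ M) (φ : ℝ) {n k : ℕ}
    (hk : k ∈ Icc 1 n) :
    ‖(f (φ + π / (4 * n) + 2 * k * π / n) - f φ) /
        (tan ((φ + π / (4 * n) + 2 * k * π / n - φ) / 2) : ℂ)‖
      ≤ 8 * M * n * ((k : ℝ)⁻¹ + ((n + 1 - k : ℕ) : ℝ)⁻¹) := by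
  have hN : (n : ℝ) ≠ 0 := by have := mem_Icc.1 hk; norm_cast; omega
  have hM : 0 ≤ M := (norm_nonneg _).trans (hfM 0)
  have hnode : (φ + π / (4 * n) + 2 * k * π / n - φ) / 2 = π * (8 * k + 1) / (8 * n) := by
    field_simp; ring
  rw [hnode]
  calc _ ≤ ‖f (φ + π / (4 * n) + 2 * k * π / n) - f φ‖ * |sin (π * (8 * k + 1) / (8 * n))|⁻¹ :=
        norm_div_tan_le _ _
    _ ≤ (M + M) * (4 * n * ((k : ℝ)⁻¹ + ((n + 1 - k : ℕ) : ℝ)⁻¹)) :=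
        mul_le_mul ((norm_sub_le _ _).trans (add_le_add (hfM _) (hfM _)))
          (inv_abs_sin_szego_node_le hk) (by positivity) (by linarith)
    _ = _ := by ring

open Complex in
theorem prescribed_node_pointwise_stability :
    ∃ C : ℝ, 0 < C ∧ ∀ (f : ℝ → ℂ), Continuous f → (∀ x, f (x + 2 * Real.pi) = f x) →
      ∀ (φ : ℝ) (n : ℕ), 2 ≤ n →
        ‖(1 / (n : ℂ)) * ∑ k ∈ Finset.Icc 1 n,
            (f (φ + Real.pi / (4 * n) + 2 * k * Real.pi / n) - f φ) /
              (Real.tan ((φ + Real.pi / (4 * n) + 2 * k * Real.pi / n - φ) / 2) : ℂ)‖ ≤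
          C * Real.log n * ⨆ x : Set.Icc (-Real.pi) Real.pi, ‖f x‖ := by
  refine ⟨64, by norm_num, fun f hf hper φ n hn => ?_⟩
  set M := ⨆ x : Set.Icc (-π) π, ‖f x‖
  have hfM (t : ℝ) : ‖f t‖ ≤ M :=
    Function.Periodic.norm_le_iSup_Icc hper hf (by positivity) (by linarith) t
  have hM : 0 ≤ M := (norm_nonneg _).trans (hfM 0)
  have hlog : 1 / 3 ≤ Real.log n :=
    le_trans (by linarith [log_two_gt_d9]) (log_le_log two_pos (by exact_mod_cast hn))
  rw [norm_mul, norm_div, norm_one, Complex.norm_natCast]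
  calc _ ≤ 1 / (n : ℝ) * ∑ k ∈ Icc 1 n, 8 * M * n * ((k : ℝ)⁻¹ + ((n + 1 - k : ℕ) : ℝ)⁻¹) := by
        gcongr
        exact (norm_sum_le _ _).trans (sum_le_sum fun k hk => norm_szego_term_le hfM φ hk)
    _ = 8 * M * ∑ k ∈ Icc 1 n, ((k : ℝ)⁻¹ + ((n + 1 - k : ℕ) : ℝ)⁻¹) := by
        have : (n : ℝ) ≠ 0 := by positivity
        rw [← mul_sum]; field_simp
    _ ≤ 8 * M * (2 * (1 + Real.log n)) := by gcongr; exact sum_Icc_inv_add_inv_reflect_le n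
    _ ≤ 64 * Real.log n * M := by nlinarith
end

section
/- If Q is a trigonometric polynomial of degree at most n, then (π/n)·‖Q′‖_∞ ≤ C·ω(Q, 1/n) ≤ C′·(π/n)·‖Q′‖_∞ and moreover ω(f,1/n) ≤ 4∫_{1/(2n)}^{1/n} ω(f,t)/t dt for any continuous 2π-periodic f, where C, C′ are absolute constants. -/
/-!
Write `Q(θ) = ∑_{|k| ≤ n} c_k e^{ikθ}`. The polynomial `P(z) = ∑ c_k z^{k+n}` has `|P| = |Q|` on
the unit circle, and so has its reversal `z^{2n} P(1/z)`; by the maximum principle applied to both,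
`|P(z)| ≤ ‖Q‖ max(1, |z|)^{2n}`. Cauchy's estimate on the circle of radius `1/n` about `e^{iθ}` then
gives the Bernstein-type inequality `‖Q'‖ ≤ (e² + 1) n ‖Q‖`.

Applied to `Q'` it bounds `Q''`, so Taylor's formula gives
`|Q(x + ℓ) - Q(x)| ≥ ℓ |Q'(x)| - (e² + 1) n ‖Q'‖ ℓ²` for every `x`; with `ℓ = 1/(2(e² + 1)n) ≤ 1/n`
and a supremum over `x` this yields `‖Q'‖ ≤ 4 (e² + 1) n ω(Q, 1/n)`. The reverse bound is the mean
value inequality, and the integral bound follows from `ω(t) ≤ 2 ω(t/2)` and the monotonicity of `ω`.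
-/

open Complex Real Finset MeasureTheory

noncomputable def modulusOfContinuity {E : Type*} [SeminormedAddCommGroup E] (f : ℝ → E) (t : ℝ) :
    ℝ :=
  sSup {d : ℝ | ∃ x h : ℝ, 0 < h ∧ h ≤ t ∧ d = ‖f (x + h) - f x‖}

section ModulusOfContinuity

variable {E : Type*} [SeminormedAddCommGroup E] {f : ℝ → E} {s t : ℝ}

theorem norm_sub_le_modulusOfContinuity (hf : Bornology.IsBounded (Set.range f)) (x : ℝ)
    {h : ℝ} (hh : 0 < h) (ht : h ≤ t) : ‖f (x + h) - f x‖ ≤ modulusOfContinuity f t := by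
  obtain ⟨C, hC⟩ := Metric.isBounded_range_iff.1 hf
  refine le_csSup ⟨C, ?_⟩ ⟨x, h, hh, ht, rfl⟩
  rintro _ ⟨y, k, -, -, rfl⟩
  simpa [dist_eq_norm] using hC (y + k) y

theorem modulusOfContinuity_le (ht : 0 < t) {C : ℝ}
    (hC : ∀ x h, 0 < h → h ≤ t → ‖f (x + h) - f x‖ ≤ C) : modulusOfContinuity f t ≤ C := by
  refine csSup_le ⟨_, 0, t, ht, le_rfl, rfl⟩ ?_
  rintro _ ⟨x, h, hh, hht, rfl⟩
  exact hC x h hh hht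

theorem modulusOfContinuity_nonneg (hf : Bornology.IsBounded (Set.range f)) (ht : 0 < t) :
    0 ≤ modulusOfContinuity f t :=
  (norm_nonneg _).trans (norm_sub_le_modulusOfContinuity hf 0 ht le_rfl)

theorem modulusOfContinuity_mono (hf : Bornology.IsBounded (Set.range f)) (hs : 0 < s)
    (hst : s ≤ t) : modulusOfContinuity f s ≤ modulusOfContinuity f t :=
  modulusOfContinuity_le hs fun x _ hh hhs =>
    norm_sub_le_modulusOfContinuity hf x hh (hhs.trans hst)

theorem modulusOfContinuity_add_le (hf : Bornology.IsBounded (Set.range f)) (hs : 0 < s)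
    (ht : 0 < t) :
    modulusOfContinuity f (s + t) ≤ modulusOfContinuity f s + modulusOfContinuity f t := by
  refine modulusOfContinuity_le (by positivity) fun x h hh hhst => ?_
  obtain ⟨h₁, h₂, h₁0, h₂0, h₁s, h₂t, rfl⟩ :
      ∃ h₁ h₂, 0 < h₁ ∧ 0 < h₂ ∧ h₁ ≤ s ∧ h₂ ≤ t ∧ h = h₁ + h₂ := by
    refine ⟨h * s / (s + t), h * t / (s + t), by positivity, by positivity, ?_, ?_,
      by field_simp⟩ <;> rw [div_le_iff₀ (by positivity)] <;> nlinarith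
  calc ‖f (x + (h₁ + h₂)) - f x‖ ≤ ‖f (x + h₁ + h₂) - f (x + h₁)‖ + ‖f (x + h₁) - f x‖ := by
        rw [← add_assoc]; exact norm_sub_le_norm_sub_add_norm_sub _ _ _
    _ ≤ modulusOfContinuity f t + modulusOfContinuity f s := by
        gcongr
        · exact norm_sub_le_modulusOfContinuity hf _ h₂0 h₂t
        · exact norm_sub_le_modulusOfContinuity hf _ h₁0 h₁s
    _ = _ := add_comm _ _

theorem modulusOfContinuity_le_mul_of_norm_deriv_le {F : Type*} [NormedAddCommGroup F]
    [NormedSpace ℝ F] {g : ℝ → F} {C : ℝ} (hg : Differentiable ℝ g) (hC : ∀ x, ‖deriv g x‖ ≤ C)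
    (ht : 0 < t) : modulusOfContinuity g t ≤ C * t := by
  refine modulusOfContinuity_le ht fun x h hh hht => ?_
  have hC0 : 0 ≤ C := (norm_nonneg _).trans (hC 0)
  calc ‖g (x + h) - g x‖ ≤ C * ‖x + h - x‖ :=
        Convex.norm_image_sub_le_of_norm_deriv_le (fun y _ => hg y) (fun y _ => hC y)
          convex_univ (Set.mem_univ _) (Set.mem_univ _)
    _ ≤ C * t := by rw [add_sub_cancel_left, Real.norm_of_nonneg hh.le]; gcongr

end ModulusOfContinuity

theorem le_integral_div_self_of_monotoneOn {φ : ℝ → ℝ} {a b : ℝ} (hφ : MonotoneOn φ (Set.Icc a b))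
    (ha : 0 < a) (hab : a ≤ b) (hφa : 0 ≤ φ a) : φ a * (b - a) / b ≤ ∫ t in a..b, φ t / t := by
  have hint : IntervalIntegrable (fun t => φ t / t) volume a b := by
    simp only [div_eq_mul_inv]
    refine MonotoneOn.intervalIntegrable (by rwa [Set.uIcc_of_le hab]) |>.mul_continuousOn
      (continuousOn_id.inv₀ fun t ht => ?_)
    rw [Set.uIcc_of_le hab] at ht
    exact (ha.trans_le ht.1).ne'
  have hle : ∀ t ∈ Set.Icc a b, φ a / b ≤ φ t / t := fun t ht =>
    div_le_div₀ (hφa.trans (hφ ⟨le_rfl, hab⟩ ht ht.1)) (hφ ⟨le_rfl, hab⟩ ht ht.1)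
      (ha.trans_le ht.1) ht.2
  calc φ a * (b - a) / b = ∫ _ in a..b, φ a / b := by simp; ring
    _ ≤ _ := intervalIntegral.integral_mono_on hab intervalIntegrable_const hint hle

theorem modulusOfContinuity_le_four_mul_integral {E : Type*} [SeminormedAddCommGroup E]
    {f : ℝ → E} (hf : Bornology.IsBounded (Set.range f)) {t : ℝ} (ht : 0 < t) :
    modulusOfContinuity f t ≤ 4 * ∫ s in t / 2..t, modulusOfContinuity f s / s := by
  have hint := le_integral_div_self_of_monotoneOn
    (fun s hs s' _ hss' => modulusOfContinuity_mono hf (by linarith [hs.1]) hss')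
    (half_pos ht) (half_le_self ht.le) (modulusOfContinuity_nonneg hf (half_pos ht))
  calc modulusOfContinuity f t = modulusOfContinuity f (t / 2 + t / 2) := by rw [add_halves]
    _ ≤ 2 * modulusOfContinuity f (t / 2) := by
        linarith [modulusOfContinuity_add_le hf (half_pos ht) (half_pos ht)]
    _ = 4 * (modulusOfContinuity f (t / 2) * (t - t / 2) / t) := by field_simp; ring
    _ ≤ _ := by gcongr

theorem norm_sub_sub_smul_deriv_le {F : Type*} [NormedAddCommGroup F] [NormedSpace ℝ F]
    {g : ℝ → F} {K ℓ : ℝ} (hg : Differentiable ℝ g) (hg' : Differentiable ℝ (deriv g))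
    (hK : ∀ y, ‖deriv (deriv g) y‖ ≤ K) (x : ℝ) (hℓ : 0 ≤ ℓ) :
    ‖g (x + ℓ) - g x - ℓ • deriv g x‖ ≤ K * ℓ ^ 2 := by
  have hderiv : ∀ y ∈ Set.Icc x (x + ℓ), HasDerivWithinAt (fun y => g y - (y - x) • deriv g x)
      (deriv g y - deriv g x) (Set.Icc x (x + ℓ)) y := fun y _ =>
    ((hg y).hasDerivAt.sub (((hasDerivAt_id y).sub_const x).smul_const (deriv g x))).congr_deriv
      (by simp) |>.hasDerivWithinAt
  have hbound : ∀ y ∈ Set.Icc x (x + ℓ), ‖deriv g y - deriv g x‖ ≤ K * ℓ := fun y hy => by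
    calc ‖deriv g y - deriv g x‖ ≤ K * ‖y - x‖ :=
          Convex.norm_image_sub_le_of_norm_deriv_le (fun y _ => hg' y) (fun y _ => hK y)
            convex_univ (Set.mem_univ _) (Set.mem_univ _)
      _ ≤ K * ℓ := by
          have hK0 : 0 ≤ K := (norm_nonneg _).trans (hK 0)
          rw [Real.norm_of_nonneg (by linarith [hy.1])]; gcongr; linarith [hy.2]
  have := Convex.norm_image_sub_le_of_norm_hasDerivWithin_le hderiv hbound (convex_Icc _ _)
    (Set.left_mem_Icc.2 (by linarith)) (Set.right_mem_Icc.2 (by linarith))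
  simp only [sub_self, zero_smul, sub_zero, add_sub_cancel_left, Real.norm_of_nonneg hℓ] at this
  calc ‖g (x + ℓ) - g x - ℓ • deriv g x‖ = ‖g (x + ℓ) - ℓ • deriv g x - g x‖ := by
        rw [sub_right_comm]
    _ ≤ K * ℓ ^ 2 := by linarith

theorem norm_le_of_forall_norm_exp_mul_I_le {E : Type*} [NormedAddCommGroup E] [NormedSpace ℂ E]
    {F : ℂ → E} {M : ℝ} (hF : Differentiable ℂ F) (hM : ∀ θ : ℝ, ‖F (exp (θ * I))‖ ≤ M) {z : ℂ}
    (hz : ‖z‖ ≤ 1) : ‖F z‖ ≤ M := by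
  refine Complex.norm_le_of_forall_mem_frontier_norm_le Metric.isBounded_ball hF.diffContOnCl
    (fun w hw => ?_) (by rwa [closure_ball 0 one_ne_zero, mem_closedBall_zero_iff])
  rw [frontier_ball 0 one_ne_zero, mem_sphere_zero_iff_norm] at hw
  obtain ⟨θ, rfl⟩ := (Complex.norm_eq_one_iff w).1 hw
  exact hM θ

-- `j` encodes the frequency `j - n ∈ [-n, n]`.
noncomputable def fourierMode (n : ℕ) (j : Fin (2 * n + 1)) (x : ℝ) : ℂ :=
  exp ((((j : ℕ) : ℂ) - n) * x * I)

def trigPolySpace (n : ℕ) : Submodule ℂ (ℝ → ℂ) :=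
  Submodule.span ℂ (Set.range (fourierMode n))

noncomputable def trigPoly (n : ℕ) (c : Fin (2 * n + 1) → ℂ) : ℝ → ℂ :=
  ∑ j, c j • fourierMode n j

section TrigPoly

variable {n : ℕ}

theorem trigPoly_apply (c : Fin (2 * n + 1) → ℂ) (x : ℝ) :
    trigPoly n c x = ∑ j, c j * fourierMode n j x := by
  simp [trigPoly, Finset.sum_apply]

theorem mem_trigPolySpace_iff {f : ℝ → ℂ} : f ∈ trigPolySpace n ↔ ∃ c, trigPoly n c = f :=
  Submodule.mem_span_range_iff_exists_fun ℂ

theorem exp_mem_trigPolySpace {k : ℤ} (hk₁ : -(n : ℤ) ≤ k) (hk₂ : k ≤ n) :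
    (fun x : ℝ => exp (k * x * I)) ∈ trigPolySpace n := by
  refine Submodule.subset_span ⟨⟨(k + n).toNat, by omega⟩, funext fun x => ?_⟩
  have hcast : (((k + n).toNat : ℕ) : ℂ) = k + n := by
    exact_mod_cast Int.toNat_of_nonneg (by omega : 0 ≤ k + n)
  simp [fourierMode, hcast]

theorem cos_mem_trigPolySpace {k : ℕ} (hk : k ≤ n) :
    (fun x : ℝ => ((Real.cos (k * x) : ℝ) : ℂ)) ∈ trigPolySpace n := by
  have hpos := exp_mem_trigPolySpace (n := n) (k := k) (by omega) (by omega)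
  have hneg := exp_mem_trigPolySpace (n := n) (k := -k) (by omega) (by omega)
  convert (trigPolySpace n).smul_mem (2⁻¹ : ℂ) (add_mem hpos hneg) using 1
  funext x
  simp only [ofReal_cos, Complex.cos, ofReal_mul, ofReal_natCast, neg_mul, Int.cast_natCast,
    Int.cast_neg, Pi.smul_apply, Pi.add_apply, smul_eq_mul]
  ring_nf

theorem sin_mem_trigPolySpace {k : ℕ} (hk : k ≤ n) :
    (fun x : ℝ => ((Real.sin (k * x) : ℝ) : ℂ)) ∈ trigPolySpace n := by
  have hpos := exp_mem_trigPolySpace (n := n) (k := k) (by omega) (by omega)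
  have hneg := exp_mem_trigPolySpace (n := n) (k := -k) (by omega) (by omega)
  convert (trigPolySpace n).smul_mem (I / 2) (sub_mem hneg hpos) using 1
  funext x
  simp only [ofReal_sin, Complex.sin, ofReal_mul, ofReal_natCast, neg_mul, Int.cast_neg,
    Int.cast_natCast, Pi.smul_apply, Pi.sub_apply, smul_eq_mul]
  ring_nf

theorem cos_sin_sum_mem_trigPolySpace (a b : ℕ → ℂ) :
    (fun x : ℝ => a 0 / 2 + ∑ k ∈ Icc 1 n, (a k * Real.cos (k * x) + b k * Real.sin (k * x)))
      ∈ trigPolySpace n := by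
  have hconst := exp_mem_trigPolySpace (n := n) (k := 0) (by omega) (by omega)
  convert add_mem ((trigPolySpace n).smul_mem (a 0 / 2) hconst) (sum_mem (t := Icc 1 n) fun k hk =>
    add_mem ((trigPolySpace n).smul_mem (a k) (cos_mem_trigPolySpace (mem_Icc.1 hk).2))
      ((trigPolySpace n).smul_mem (b k) (sin_mem_trigPolySpace (mem_Icc.1 hk).2))) using 1
  funext x
  simp [Finset.sum_apply]

theorem norm_fourierMode (j : Fin (2 * n + 1)) (x : ℝ) : ‖fourierMode n j x‖ = 1 := by
  rw [fourierMode]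
  exact_mod_cast Complex.norm_exp_ofReal_mul_I ((((j : ℕ) : ℝ) - n) * x)

theorem hasDerivAt_fourierMode (j : Fin (2 * n + 1)) (x : ℝ) :
    HasDerivAt (fourierMode n j) ((((j : ℕ) : ℂ) - n) * I * fourierMode n j x) x :=
  (((hasDerivAt_id x).ofReal_comp.const_mul (((j : ℕ) : ℂ) - n)).mul_const I).cexp.congr_deriv
    (by simp [fourierMode]; ring)

theorem hasDerivAt_trigPoly (c : Fin (2 * n + 1) → ℂ) (x : ℝ) :
    HasDerivAt (trigPoly n c) (trigPoly n (fun j => (((j : ℕ) : ℂ) - n) * I * c j) x) x := by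
  rw [show trigPoly n c = fun y => ∑ j, c j * fourierMode n j y from funext (trigPoly_apply c),
    trigPoly_apply]
  exact (HasDerivAt.fun_sum fun j _ => (hasDerivAt_fourierMode j x).const_mul (c j)).congr_deriv
    (sum_congr rfl fun j _ => by ring)

theorem norm_trigPoly_le (c : Fin (2 * n + 1) → ℂ) (x : ℝ) : ‖trigPoly n c x‖ ≤ ∑ j, ‖c j‖ := by
  rw [trigPoly_apply]
  refine (norm_sum_le _ _).trans_eq (sum_congr rfl fun j _ => ?_)
  rw [norm_mul, norm_fourierMode, mul_one]

variable {f : ℝ → ℂ}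

theorem differentiable_of_mem_trigPolySpace (hf : f ∈ trigPolySpace n) : Differentiable ℝ f := by
  obtain ⟨c, rfl⟩ := mem_trigPolySpace_iff.1 hf
  exact fun x => (hasDerivAt_trigPoly c x).differentiableAt

theorem deriv_mem_trigPolySpace (hf : f ∈ trigPolySpace n) : deriv f ∈ trigPolySpace n := by
  obtain ⟨c, rfl⟩ := mem_trigPolySpace_iff.1 hf
  exact mem_trigPolySpace_iff.2 ⟨_, funext fun x => (hasDerivAt_trigPoly c x).deriv.symm⟩

theorem isBounded_range_of_mem_trigPolySpace (hf : f ∈ trigPolySpace n) :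
    Bornology.IsBounded (Set.range f) := by
  obtain ⟨c, rfl⟩ := mem_trigPolySpace_iff.1 hf
  exact isBounded_iff_forall_norm_le.2 ⟨_, Set.forall_mem_range.2 (norm_trigPoly_le c)⟩

theorem norm_le_iSup_norm_of_mem_trigPolySpace (hf : f ∈ trigPolySpace n) (x : ℝ) :
    ‖f x‖ ≤ ⨆ y, ‖f y‖ := by
  obtain ⟨c, rfl⟩ := mem_trigPolySpace_iff.1 hf
  exact le_ciSup ⟨_, Set.forall_mem_range.2 (norm_trigPoly_le c)⟩ x

noncomputable def circlePoly (n : ℕ) (c : Fin (2 * n + 1) → ℂ) (z : ℂ) : ℂ :=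
  ∑ j, c j * z ^ (j : ℕ)

noncomputable def reversedCirclePoly (n : ℕ) (c : Fin (2 * n + 1) → ℂ) (w : ℂ) : ℂ :=
  ∑ j, c j * w ^ (2 * n - j)

theorem circlePoly_exp_mul_I (c : Fin (2 * n + 1) → ℂ) (θ : ℝ) :
    circlePoly n c (exp (θ * I)) = exp (((n * θ : ℝ) : ℂ) * I) * trigPoly n c θ := by
  rw [circlePoly, trigPoly_apply, mul_sum]
  refine sum_congr rfl fun j _ => ?_
  rw [← Complex.exp_nat_mul, fourierMode, mul_left_comm _ (c j), ← Complex.exp_add]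
  push_cast; ring_nf

theorem reversedCirclePoly_exp_mul_I (c : Fin (2 * n + 1) → ℂ) (θ : ℝ) :
    reversedCirclePoly n c (exp (θ * I)) = exp (((n * θ : ℝ) : ℂ) * I) * trigPoly n c (-θ) := by
  rw [reversedCirclePoly, trigPoly_apply, mul_sum]
  refine sum_congr rfl fun j _ => ?_
  rw [← Complex.exp_nat_mul, fourierMode, mul_left_comm _ (c j), ← Complex.exp_add,
    Nat.cast_sub (by omega : (j : ℕ) ≤ 2 * n)]
  push_cast; ring_nf

theorem circlePoly_eq_pow_mul_reversedCirclePoly (c : Fin (2 * n + 1) → ℂ) {z : ℂ} (hz : z ≠ 0) :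
    circlePoly n c z = z ^ (2 * n) * reversedCirclePoly n c z⁻¹ := by
  rw [circlePoly, reversedCirclePoly, mul_sum]
  refine sum_congr rfl fun j _ => ?_
  rw [inv_pow, mul_left_comm, ← pow_sub₀ z hz (Nat.sub_le _ _),
    Nat.sub_sub_self (by omega)]

variable {M : ℝ}

theorem differentiable_circlePoly {c : Fin (2 * n + 1) → ℂ} :
    Differentiable ℂ (circlePoly n c) := by
  unfold circlePoly; fun_prop

theorem norm_circlePoly_le {c : Fin (2 * n + 1) → ℂ} (hM : ∀ x, ‖trigPoly n c x‖ ≤ M) (z : ℂ) :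
    ‖circlePoly n c z‖ ≤ M * max 1 ‖z‖ ^ (2 * n) := by
  rcases le_total ‖z‖ 1 with hz | hz
  · rw [max_eq_left hz, one_pow, mul_one]
    refine norm_le_of_forall_norm_exp_mul_I_le differentiable_circlePoly (fun θ => ?_) hz
    rw [circlePoly_exp_mul_I, norm_mul, Complex.norm_exp_ofReal_mul_I, one_mul]
    exact hM θ
  · have hz0 : z ≠ 0 := norm_pos_iff.1 (one_pos.trans_le hz)
    have hR : Differentiable ℂ (reversedCirclePoly n c) := by unfold reversedCirclePoly; fun_prop
    rw [max_eq_right hz, circlePoly_eq_pow_mul_reversedCirclePoly c hz0, norm_mul, norm_pow,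
      mul_comm M]
    gcongr
    refine norm_le_of_forall_norm_exp_mul_I_le hR (fun θ => ?_)
      (by rw [norm_inv]; exact inv_le_one_of_one_le₀ hz)
    rw [reversedCirclePoly_exp_mul_I, norm_mul, Complex.norm_exp_ofReal_mul_I, one_mul]
    exact hM (-θ)

theorem norm_deriv_circlePoly_le (hn : 1 ≤ n) {c : Fin (2 * n + 1) → ℂ}
    (hM : ∀ x, ‖trigPoly n c x‖ ≤ M) (θ : ℝ) :
    ‖deriv (circlePoly n c) (exp (θ * I))‖ ≤ Real.exp 2 * n * M := by
  have hn0 : (0 : ℝ) < n := by exact_mod_cast hn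
  have hM0 : 0 ≤ M := (norm_nonneg _).trans (hM 0)
  have hpow : (1 + 1 / (n : ℝ)) ^ (2 * n) ≤ Real.exp 2 := by
    calc (1 + 1 / (n : ℝ)) ^ (2 * n) ≤ Real.exp (1 / n) ^ (2 * n) := by
          gcongr; linarith [Real.add_one_le_exp (1 / (n : ℝ))]
      _ = Real.exp 2 := by rw [← Real.exp_nat_mul]; congr 1; push_cast; field_simp
  have hsphere : ∀ z ∈ Metric.sphere (exp (θ * I)) (1 / n),
      ‖circlePoly n c z‖ ≤ Real.exp 2 * M := by
    intro z hz
    have hz' : ‖z‖ ≤ 1 + 1 / n := by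
      rw [mem_sphere_iff_norm] at hz
      simpa [hz] using norm_le_norm_add_norm_sub' z (exp (θ * I))
    calc ‖circlePoly n c z‖ ≤ M * max 1 ‖z‖ ^ (2 * n) := norm_circlePoly_le hM z
      _ ≤ M * (1 + 1 / n) ^ (2 * n) := by
          gcongr; exact max_le (by linarith [one_div_pos.2 hn0]) hz'
      _ ≤ Real.exp 2 * M := by rw [mul_comm]; gcongr
  calc _ ≤ Real.exp 2 * M / (1 / n) := Complex.norm_deriv_le_of_forall_mem_sphere_norm_le
        (by positivity) differentiable_circlePoly.diffContOnCl hsphere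
    _ = _ := by field_simp

theorem norm_deriv_le_of_mem_trigPolySpace (hn : 1 ≤ n) {f : ℝ → ℂ} (hf : f ∈ trigPolySpace n)
    (hM : ∀ x, ‖f x‖ ≤ M) (θ : ℝ) : ‖deriv f θ‖ ≤ (Real.exp 2 + 1) * n * M := by
  obtain ⟨c, rfl⟩ := mem_trigPolySpace_iff.1 hf
  set ζ := exp (θ * I)
  set e := exp (((n * θ : ℝ) : ℂ) * I)
  -- differentiate both sides of `circlePoly_exp_mul_I` in `θ`
  have hζ : HasDerivAt (fun θ : ℝ => exp (θ * I)) (ζ * I) θ :=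
    ((hasDerivAt_id θ).ofReal_comp.mul_const I).cexp.congr_deriv (by simp [ζ])
  have he : HasDerivAt (fun θ : ℝ => exp (((n * θ : ℝ) : ℂ) * I)) (n * I * e) θ :=
    (((hasDerivAt_id θ).const_mul (n : ℝ)).ofReal_comp.mul_const I).cexp.congr_deriv
      (by simp [e]; ring)
  have hlhs := (differentiable_circlePoly (c := c) ζ).hasDerivAt.comp θ hζ
  rw [show (circlePoly n c ∘ fun θ : ℝ => exp (θ * I)) = fun θ => exp (((n * θ : ℝ) : ℂ) * I) *
    trigPoly n c θ from funext (circlePoly_exp_mul_I c)] at hlhs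
  have key : e * deriv (trigPoly n c) θ =
      deriv (circlePoly n c) ζ * (ζ * I) - n * I * e * trigPoly n c θ := by
    rw [hlhs.unique (he.mul (hasDerivAt_trigPoly c θ).differentiableAt.hasDerivAt)]; ring
  have he1 : ‖e‖ = 1 := Complex.norm_exp_ofReal_mul_I _
  calc ‖deriv (trigPoly n c) θ‖ = ‖e * deriv (trigPoly n c) θ‖ := by rw [norm_mul, he1, one_mul]
    _ ≤ ‖deriv (circlePoly n c) ζ * (ζ * I)‖ + ‖n * I * e * trigPoly n c θ‖ := by
        rw [key]; exact norm_sub_le _ _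
    _ = ‖deriv (circlePoly n c) ζ‖ + n * ‖trigPoly n c θ‖ := by
        simp [ζ, he1]
    _ ≤ Real.exp 2 * n * M + n * M := by
        gcongr
        · exact norm_deriv_circlePoly_le hn hM θ
        · exact hM θ
    _ = _ := by ring

theorem iSup_norm_deriv_le_modulusOfContinuity (hn : 1 ≤ n) (hf : f ∈ trigPolySpace n) :
    ⨆ x, ‖deriv f x‖ ≤ 4 * ((Real.exp 2 + 1) * n) * modulusOfContinuity f (1 / n) := by
  set K := (Real.exp 2 + 1) * n
  set M := ⨆ x, ‖deriv f x‖
  have hn1 : (1 : ℝ) ≤ n := by exact_mod_cast hn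
  have hKn : n ≤ K := le_mul_of_one_le_left (by positivity) (by linarith [Real.exp_pos 2])
  have hK0 : 0 < K := by linarith
  have hf' := deriv_mem_trigPolySpace hf
  have hM : ∀ x, ‖deriv f x‖ ≤ M := norm_le_iSup_norm_of_mem_trigPolySpace hf'
  have hKM : ∀ y, ‖deriv (deriv f) y‖ ≤ K * M := norm_deriv_le_of_mem_trigPolySpace hn hf' hM
  -- the step `ℓ` balances the first-order gain `ℓ ‖f' x‖` against the Taylor error `K M ℓ²`
  set ℓ := 1 / (2 * K)
  have hℓ : 0 < ℓ := by positivity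
  have hℓn : ℓ ≤ 1 / n := one_div_le_one_div_of_le (by positivity) (by linarith)
  have hpoint : ∀ x, ‖deriv f x‖ ≤ 2 * K * modulusOfContinuity f (1 / n) + M / 2 := fun x => by
    have htaylor := norm_sub_sub_smul_deriv_le (differentiable_of_mem_trigPolySpace hf)
      (differentiable_of_mem_trigPolySpace hf') hKM x hℓ.le
    have hω := norm_sub_le_modulusOfContinuity (isBounded_range_of_mem_trigPolySpace hf) x hℓ hℓn
    have hsub := norm_sub_le (f (x + ℓ) - f x) (f (x + ℓ) - f x - ℓ • deriv f x)
    rw [sub_sub_cancel, norm_smul, Real.norm_of_nonneg hℓ.le] at hsub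
    calc ‖deriv f x‖ = 2 * K * (ℓ * ‖deriv f x‖) := by
          rw [← mul_assoc, show 2 * K * ℓ = 1 by simp only [ℓ]; field_simp, one_mul]
      _ ≤ 2 * K * (modulusOfContinuity f (1 / n) + K * M * ℓ ^ 2) := by gcongr; linarith
      _ = _ := by simp only [ℓ]; field_simp
  have hMle := ciSup_le hpoint
  linarith

end TrigPoly

theorem trig_poly_derivative_modulus :
    ∃ C C' : ℝ, 0 < C ∧ 0 < C' ∧
      (∀ (n : ℕ), 1 ≤ n → ∀ (a b : ℕ → ℂ) (Q : ℝ → ℂ) (ωQ : ℝ → ℝ),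
        (∀ x, Q x = a 0 / 2 + ∑ k ∈ Finset.Icc 1 n,
          (a k * Real.cos (k * x) + b k * Real.sin (k * x))) →
        (∀ t, ωQ t = sSup {d : ℝ | ∃ x h : ℝ, 0 < h ∧ h ≤ t ∧ d = ‖Q (x + h) - Q x‖}) →
        (Real.pi / n) * (⨆ x : ℝ, ‖deriv Q x‖) ≤ C * ωQ (1 / n) ∧
        ωQ (1 / n) ≤ C' * ((Real.pi / n) * ⨆ x : ℝ, ‖deriv Q x‖)) ∧
      (∀ (f : ℝ → ℂ), Continuous f → (∀ x, f (x + 2 * Real.pi) = f x) →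
        ∀ ω : ℝ → ℝ,
          (∀ t, ω t = sSup {d : ℝ | ∃ x h : ℝ, 0 < h ∧ h ≤ t ∧ d = ‖f (x + h) - f x‖}) →
          ∀ n : ℕ, 1 ≤ n →
            ω (1 / n) ≤ 4 * ∫ t in (1 / (2 * n : ℝ))..(1 / n : ℝ), ω t / t) := by
  refine ⟨4 * π * (Real.exp 2 + 1), 1, by positivity, one_pos,
    fun n hn a b Q ωQ hQ hω => ?_, fun f hf hper ω hω n hn => ?_⟩
  · obtain rfl : ωQ = modulusOfContinuity Q := funext hω
    have hQ : Q ∈ trigPolySpace n := funext hQ ▸ cos_sin_sum_mem_trigPolySpace a b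
    have hM := norm_le_iSup_norm_of_mem_trigPolySpace (deriv_mem_trigPolySpace hQ)
    constructor
    · calc π / n * ⨆ x, ‖deriv Q x‖
          ≤ π / n * (4 * ((Real.exp 2 + 1) * n) * modulusOfContinuity Q (1 / n)) := by
            gcongr; exact iSup_norm_deriv_le_modulusOfContinuity hn hQ
        _ = _ := by field_simp
    · calc modulusOfContinuity Q (1 / n) ≤ (⨆ x, ‖deriv Q x‖) * (1 / n) :=
            modulusOfContinuity_le_mul_of_norm_deriv_le
              (differentiable_of_mem_trigPolySpace hQ) hM (by positivity)
        _ ≤ 1 * (π / n * ⨆ x, ‖deriv Q x‖) := by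
            have hM0 := (norm_nonneg _).trans (hM 0)
            rw [one_mul, mul_comm, div_eq_mul_one_div π, mul_assoc]
            exact le_mul_of_one_le_left (by positivity) (by linarith [pi_gt_three])
  · obtain rfl : ω = modulusOfContinuity f := funext hω
    rw [show 1 / (2 * n : ℝ) = 1 / n / 2 by ring]
    exact modulusOfContinuity_le_four_mul_integral
      (Function.Periodic.isBounded_of_continuous hper two_pi_pos.ne' hf) (by positivity)
end
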